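/- arXiv:1707.06444 — 5 statements merged into one kernel-verified Lean document; each statement's English description precedes it below -/
import Mathlib

section
/- For a binomial random variable X ~ Bin(N,p), E[1/(1+X)²] ≤ 2/(Np)². -/
/-!
Since `1 / (k + 1)² ≤ 2 / ((k + 1)(k + 2))` and
`C(N, k) / ((k + 1)(k + 2)) = C(N + 2, k + 2) / ((N + 1)(N + 2))`, the moment is at most
`2 / ((N + 1)(N + 2) p²)` times a partial sum of the `Bin(N + 2, p)` probabilities, which is at
most `1`; finally `(N + 1)(N + 2) ≥ N²`.
-/

open Finset

lemma Nat.add_one_mul_add_two_mul_choose (N k : ℕ) :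
    (N + 1) * (N + 2) * N.choose k = (N + 2).choose (k + 2) * ((k + 1) * (k + 2)) := by
  calc (N + 1) * (N + 2) * N.choose k = (N + 2) * ((N + 1) * N.choose k) := by ring
    _ = (N + 2) * (N + 1).choose (k + 1) * (k + 1) := by rw [Nat.add_one_mul_choose_eq]; ring
    _ = _ := by rw [Nat.add_one_mul_choose_eq]; ring

lemma choose_div_add_one_sq_le (N k : ℕ) :
    (N.choose k : ℝ) / ((k : ℝ) + 1) ^ 2 ≤
      2 / (((N : ℝ) + 1) * ((N : ℝ) + 2)) * ((N + 2).choose (k + 2) : ℝ) := by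
  have hid : ((N : ℝ) + 1) * ((N : ℝ) + 2) * N.choose k
      = (N + 2).choose (k + 2) * (((k : ℝ) + 1) * ((k : ℝ) + 2)) := by
    exact_mod_cast Nat.add_one_mul_add_two_mul_choose N k
  rw [div_le_iff₀ (by positivity), div_mul_eq_mul_div, div_mul_eq_mul_div,
    le_div_iff₀ (by positivity), mul_comm, hid]
  have : (0 : ℝ) ≤ (N + 2).choose (k + 2) * ((k : ℝ) + 1) * k := by positivity
  nlinarith

lemma sum_binomial_pmf_le_one {n : ℕ} {p : ℝ} (hp0 : 0 ≤ p) (hp1 : p ≤ 1) {s : Finset ℕ}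
    (hs : s ⊆ range (n + 1)) :
    ∑ j ∈ s, (n.choose j : ℝ) * p ^ j * (1 - p) ^ (n - j) ≤ 1 := by
  calc ∑ j ∈ s, (n.choose j : ℝ) * p ^ j * (1 - p) ^ (n - j)
      ≤ ∑ j ∈ range (n + 1), (n.choose j : ℝ) * p ^ j * (1 - p) ^ (n - j) :=
        sum_le_sum_of_subset_of_nonneg hs fun _ _ _ => by positivity
    _ = (p + (1 - p)) ^ n := by rw [add_pow]; exact sum_congr rfl fun _ _ => by ring
    _ = 1 := by simp

lemma sum_choose_add_two_mul_pow_le_one {N : ℕ} {p : ℝ} (hp0 : 0 ≤ p) (hp1 : p ≤ 1) :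
    ∑ k ∈ range (N + 1), ((N + 2).choose (k + 2) : ℝ) * p ^ (k + 2) * (1 - p) ^ (N - k) ≤ 1 := by
  have hshift := sum_Ico_eq_sum_range
    (fun j => ((N + 2).choose j : ℝ) * p ^ j * (1 - p) ^ (N + 2 - j)) 2 (N + 3)
  simp only [show N + 3 - 2 = N + 1 by omega, add_comm 2, Nat.add_sub_add_right] at hshift
  rw [← hshift]
  exact sum_binomial_pmf_le_one hp0 hp1 fun _ hj => mem_range.2 (mem_Ico.1 hj).2

/-- For a binomial random variable `X ~ Bin(N,p)` with `N ≥ 1`, `p ∈ (0,1]`,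
we have `E[1/(1+X)²] ≤ 2/(Np)²`. -/
theorem binomial_inv_sq_moment_le (N : ℕ) (hN : 1 ≤ N) (p : ℝ) (hp0 : 0 < p) (hp1 : p ≤ 1) :
    ∑ k ∈ Finset.range (N + 1),
        (N.choose k : ℝ) * p ^ k * (1 - p) ^ (N - k) * (1 / (1 + (k : ℝ)) ^ 2)
      ≤ 2 / ((N : ℝ) * p) ^ 2 := by
  set c : ℝ := 2 / (((N : ℝ) + 1) * ((N : ℝ) + 2))
  calc ∑ k ∈ range (N + 1),
        (N.choose k : ℝ) * p ^ k * (1 - p) ^ (N - k) * (1 / (1 + (k : ℝ)) ^ 2)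
      = ∑ k ∈ range (N + 1), (N.choose k : ℝ) / ((k : ℝ) + 1) ^ 2 * (p ^ k * (1 - p) ^ (N - k)) :=
        sum_congr rfl fun _ _ => by ring
    _ ≤ ∑ k ∈ range (N + 1), c * (N + 2).choose (k + 2) * (p ^ k * (1 - p) ^ (N - k)) :=
        sum_le_sum fun k _ => by gcongr; exact choose_div_add_one_sq_le N k
    _ = c / p ^ 2 *
          ∑ k ∈ range (N + 1), ((N + 2).choose (k + 2) : ℝ) * p ^ (k + 2) * (1 - p) ^ (N - k) := by
        rw [mul_sum]; exact sum_congr rfl fun _ _ => by field_simp; ring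
    _ ≤ c / p ^ 2 := mul_le_of_le_one_right (by positivity)
          (sum_choose_add_two_mul_pow_le_one hp0.le hp1)
    _ ≤ 2 / ((N : ℝ) * p) ^ 2 := by
        have hN' : (1 : ℝ) ≤ N := by exact_mod_cast hN
        rw [div_div, mul_pow]
        gcongr
        nlinarith
end

section
/- Let A be an N×N symmetric nonnegative matrix with all row sums equal to 1-μ for some μ ∈ (0,1). Let Ω ⊂ {1,...,N} with complement Ω′, and define B = A², H = (I - B_{Ω′})^{-1} (which exists since the spectral radius of A is at most 1-μ < 1), and the error matrix E = A_{ΩΩ′} H B_{Ω′Ω}. Then E is entrywise nonnegative and every row sum of E is at most 1-μ. -/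
/-!
The block `M = B_{Ω′Ω′}` is entrywise nonnegative with row sums at most `(1-μ)² < 1`, so its
powers decay geometrically and `H = (1 - M)⁻¹ = ∑ Mᵏ` is entrywise nonnegative; hence so is `E`.
Since the rows of `B` sum to at most `1`, `B_{Ω′Ω} 𝟙 ≤ (1 - M) 𝟙`, and applying the nonnegative
left inverse `H` of `1 - M` gives `H B_{Ω′Ω} 𝟙 ≤ 𝟙`. Therefore `E 𝟙 ≤ A_{ΩΩ′} 𝟙 ≤ A 𝟙 = (1-μ) 𝟙`.
-/

open Matrix

namespace Matrix

theorem submatrix_mulVec_one_add_submatrix_compl {R l m n : Type*} [Semiring R] [Fintype m]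
    [DecidableEq m] (A : Matrix l m R) (f : n → l) (S : Finset m) :
    A.submatrix f ((↑) : S → m) *ᵥ 1 + A.submatrix f ((↑) : ↥Sᶜ → m) *ᵥ 1 = (A *ᵥ 1) ∘ f := by
  ext i
  simp only [Pi.add_apply, Function.comp_apply, mulVec, dotProduct, submatrix_apply,
    Pi.one_apply, mul_one]
  rw [Finset.sum_coe_sort S (A (f i)), Finset.sum_coe_sort Sᶜ (A (f i)), Finset.sum_add_sum_compl]

section OrderedSemiring

variable {R l m n : Type*} [CommSemiring R] [PartialOrder R] [IsOrderedRing R]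

theorem mul_apply_nonneg [Fintype m] {A : Matrix l m R} {B : Matrix m n R}
    (hA : ∀ i j, 0 ≤ A i j) (hB : ∀ i j, 0 ≤ B i j) (i : l) (k : n) : 0 ≤ (A * B) i k :=
  Finset.sum_nonneg fun j _ => mul_nonneg (hA i j) (hB j k)

theorem mulVec_mono_of_nonneg [Fintype m] {A : Matrix l m R} (hA : ∀ i j, 0 ≤ A i j)
    {v w : m → R} (h : v ≤ w) : A *ᵥ v ≤ A *ᵥ w :=
  fun i => Finset.sum_le_sum fun j _ => mul_le_mul_of_nonneg_left (h j) (hA i j)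

theorem submatrix_mulVec_one_le [Fintype m] [DecidableEq m] {A : Matrix l m R}
    (hA : ∀ i j, 0 ≤ A i j) (f : n → l) (S : Finset m) :
    A.submatrix f ((↑) : S → m) *ᵥ 1 ≤ (A *ᵥ 1) ∘ f := by
  rw [← submatrix_mulVec_one_add_submatrix_compl A f S]
  refine le_add_of_nonneg_right ?_
  simpa using mulVec_mono_of_nonneg (A := A.submatrix f ((↑) : ↥Sᶜ → m)) (fun i j => hA (f i) j)
    (v := 0) (w := 1) fun _ => zero_le_one

theorem pow_mulVec_one_le [Fintype n] [DecidableEq n] {M : Matrix n n R}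
    (hM : ∀ i j, 0 ≤ M i j) {ρ : R} (hρ : 0 ≤ ρ) (hrow : M *ᵥ 1 ≤ ρ • 1) (k : ℕ) :
    M ^ k *ᵥ 1 ≤ ρ ^ k • 1 := by
  induction k with
  | zero => simp
  | succ k ih =>
    calc M ^ (k + 1) *ᵥ 1 = M *ᵥ (M ^ k *ᵥ 1) := by rw [pow_succ', mulVec_mulVec]
      _ ≤ M *ᵥ (ρ ^ k • 1) := mulVec_mono_of_nonneg hM ih
      _ = ρ ^ k • (M *ᵥ 1) := mulVec_smul M _ 1
      _ ≤ ρ ^ k • ρ • 1 := smul_le_smul_of_nonneg_left hrow (pow_nonneg hρ k)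
      _ = ρ ^ (k + 1) • 1 := by rw [smul_smul, pow_succ]

theorem pow_apply_le [Fintype n] [DecidableEq n] {M : Matrix n n R}
    (hM : ∀ i j, 0 ≤ M i j) {ρ : R} (hρ : 0 ≤ ρ) (hrow : M *ᵥ 1 ≤ ρ • 1) (k : ℕ) (i j : n) :
    (M ^ k) i j ≤ ρ ^ k :=
  calc (M ^ k) i j ≤ ∑ j', (M ^ k) i j' :=
        Finset.single_le_sum (fun j' _ => pow_apply_nonneg hM k i j') (Finset.mem_univ j)
    _ = (M ^ k *ᵥ 1) i := by simp [mulVec, dotProduct]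
    _ ≤ ρ ^ k := by simpa using pow_mulVec_one_le hM hρ hrow k i

end OrderedSemiring

section NeumannSeries

variable {n : Type*} [Fintype n] [DecidableEq n]

theorem summable_pow_of_nonneg {M : Matrix n n ℝ} (hM : ∀ i j, 0 ≤ M i j) {ρ : ℝ}
    (hρ0 : 0 ≤ ρ) (hρ1 : ρ < 1) (hrow : M *ᵥ 1 ≤ ρ • 1) : Summable (M ^ ·) :=
  Pi.summable.2 fun i => Pi.summable.2 fun j =>
    (summable_geometric_of_lt_one hρ0 hρ1).of_nonneg_of_le (fun k => pow_apply_nonneg hM k i j)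
      (fun k => pow_apply_le hM hρ0 hrow k i j)

theorem inv_one_sub_eq_tsum_pow {α : Type*} [CommRing α] [TopologicalSpace α]
    [IsTopologicalRing α] [T2Space α] {M : Matrix n n α} (h : Summable (M ^ ·)) :
    (1 - M)⁻¹ = ∑' k, M ^ k :=
  inv_eq_left_inv h.tsum_pow_mul_one_sub

theorem inv_one_sub_apply_nonneg {M : Matrix n n ℝ} (hM : ∀ i j, 0 ≤ M i j)
    (h : Summable (M ^ ·)) (i j : n) : 0 ≤ (1 - M)⁻¹ i j := by
  rw [inv_one_sub_eq_tsum_pow h]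
  exact (Pi.hasSum.1 (Pi.hasSum.1 h.hasSum i) j).nonneg fun k => pow_apply_nonneg hM k i j

theorem inv_one_sub_mul_self {α : Type*} [CommRing α] [TopologicalSpace α]
    [IsTopologicalRing α] [T2Space α] {M : Matrix n n α} (h : Summable (M ^ ·)) :
    (1 - M)⁻¹ * (1 - M) = 1 := by
  rw [inv_one_sub_eq_tsum_pow h]
  exact h.tsum_pow_mul_one_sub

end NeumannSeries

theorem mulVec_submatrix_mulVec_one_le_one {R n : Type*} [CommRing R] [PartialOrder R]
    [IsOrderedRing R] [Fintype n] [DecidableEq n] {B : Matrix n n R} (hB1 : B *ᵥ 1 ≤ 1)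
    (S : Finset n) {H : Matrix ↥Sᶜ ↥Sᶜ R} (hH : ∀ i j, 0 ≤ H i j)
    (hHinv : H * (1 - B.submatrix ((↑) : ↥Sᶜ → n) ((↑) : ↥Sᶜ → n)) = 1) :
    H *ᵥ (B.submatrix ((↑) : ↥Sᶜ → n) ((↑) : S → n) *ᵥ 1) ≤ 1 := by
  have hsplit : B.submatrix ((↑) : ↥Sᶜ → n) ((↑) : S → n) *ᵥ 1
      ≤ (1 - B.submatrix ((↑) : ↥Sᶜ → n) ((↑) : ↥Sᶜ → n)) *ᵥ 1 := by
    rw [sub_mulVec, one_mulVec, le_sub_iff_add_le, submatrix_mulVec_one_add_submatrix_compl]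
    exact fun i => hB1 i
  calc H *ᵥ (B.submatrix ((↑) : ↥Sᶜ → n) ((↑) : S → n) *ᵥ 1)
      ≤ H *ᵥ ((1 - B.submatrix ((↑) : ↥Sᶜ → n) ((↑) : ↥Sᶜ → n)) *ᵥ 1) :=
        mulVec_mono_of_nonneg hH hsplit
    _ = 1 := by rw [mulVec_mulVec, hHinv, one_mulVec]

end Matrix

theorem error_matrix_nonneg_row_sums_le_general
    {N : ℕ} (μ : ℝ) (hμ0 : 0 < μ) (hμ1 : μ < 1)
    (A : Matrix (Fin N) (Fin N) ℝ)
    (hnonneg : ∀ i j, 0 ≤ A i j) (hrow : ∀ i, ∑ j, A i j = 1 - μ)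
    (S : Finset (Fin N))
    (E : Matrix {i // i ∈ S} {i // i ∈ S} ℝ)
    (hE : E =
       A.submatrix (fun i : {i // i ∈ S} => (i : Fin N)) (fun j : {j // j ∈ Sᶜ} => (j : Fin N))
       * (1 - (A * A).submatrix (fun i : {i // i ∈ Sᶜ} => (i : Fin N))
              (fun j : {j // j ∈ Sᶜ} => (j : Fin N)))⁻¹
       * (A * A).submatrix (fun i : {i // i ∈ Sᶜ} => (i : Fin N))
              (fun j : {j // j ∈ S} => (j : Fin N))) :
    (∀ i j, 0 ≤ E i j) ∧ ∀ i, ∑ j, E i j ≤ 1 - μ := by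
  have hA1 : A *ᵥ 1 = (1 - μ) • 1 := funext fun i => by simp [mulVec, dotProduct, hrow]
  have hB : ∀ i j, 0 ≤ (A * A) i j := mul_apply_nonneg hnonneg hnonneg
  have hB1 : (A * A) *ᵥ 1 = (1 - μ) ^ 2 • 1 := by
    rw [← mulVec_mulVec, hA1, mulVec_smul, hA1, smul_smul, sq]
  have hρ1 : (1 - μ) ^ 2 < 1 := by nlinarith
  set M := (A * A).submatrix ((↑) : ↥Sᶜ → Fin N) ((↑) : ↥Sᶜ → Fin N)
  have hM : ∀ i j, 0 ≤ M i j := fun i j => hB _ _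
  have hsum : Summable (M ^ ·) := summable_pow_of_nonneg hM (sq_nonneg _) hρ1
    ((submatrix_mulVec_one_le hB _ _).trans_eq (by rw [hB1]; rfl))
  have hH := inv_one_sub_apply_nonneg hM hsum
  have hHC := mulVec_submatrix_mulVec_one_le_one
    (hB1.trans_le fun i => by simpa using hρ1.le) S hH (inv_one_sub_mul_self hsum)
  refine ⟨fun i j => ?_, fun i => ?_⟩
  · rw [hE]
    exact mul_apply_nonneg (mul_apply_nonneg (fun _ _ => hnonneg _ _) hH) (fun _ _ => hB _ _) i j
  calc ∑ j, E i j = (E *ᵥ 1) i := by simp [mulVec, dotProduct]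
    _ = (A.submatrix ((↑) : S → Fin N) ((↑) : ↥Sᶜ → Fin N) *ᵥ ((1 - M)⁻¹ *ᵥ
        ((A * A).submatrix ((↑) : ↥Sᶜ → Fin N) ((↑) : S → Fin N) *ᵥ 1))) i := by
        rw [hE, ← mulVec_mulVec, ← mulVec_mulVec]
    _ ≤ (A.submatrix ((↑) : S → Fin N) ((↑) : ↥Sᶜ → Fin N) *ᵥ 1) i :=
        mulVec_mono_of_nonneg (fun _ _ => hnonneg _ _) hHC i
    _ ≤ (A *ᵥ 1) i := submatrix_mulVec_one_le hnonneg _ _ i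
    _ = 1 - μ := by simp [hA1]

/-- Let `A` be symmetric, entrywise nonnegative, with all row sums `1-μ`, `μ ∈ (0,1)`.
With `B = A²`, `H = (I - B_{Ω'Ω'})⁻¹` and `E = A_{ΩΩ'} H B_{Ω'Ω}`, the error matrix `E`
is entrywise nonnegative and all its row sums are at most `1-μ`. -/
theorem error_matrix_nonneg_row_sums_le
    {N : ℕ} (μ : ℝ) (hμ0 : 0 < μ) (hμ1 : μ < 1)
    (A : Matrix (Fin N) (Fin N) ℝ) (hsymm : A.IsSymm)
    (hnonneg : ∀ i j, 0 ≤ A i j) (hrow : ∀ i, ∑ j, A i j = 1 - μ)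
    (S : Finset (Fin N))
    (E : Matrix {i // i ∈ S} {i // i ∈ S} ℝ)
    (hE : E =
       A.submatrix (fun i : {i // i ∈ S} => (i : Fin N)) (fun j : {j // j ∈ Sᶜ} => (j : Fin N))
       * (1 - (A * A).submatrix (fun i : {i // i ∈ Sᶜ} => (i : Fin N))
              (fun j : {j // j ∈ Sᶜ} => (j : Fin N)))⁻¹
       * (A * A).submatrix (fun i : {i // i ∈ Sᶜ} => (i : Fin N))
              (fun j : {j // j ∈ S} => (j : Fin N))) :
    (∀ i j, 0 ≤ E i j) ∧ ∀ i, ∑ j, E i j ≤ 1 - μ :=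
  error_matrix_nonneg_row_sums_le_general μ hμ0 hμ1 A hnonneg hrow S E hE
end

section
/- Let A be an N×N symmetric nonnegative matrix with row sums 1-μ, μ ∈ (0,1), B = A², Ω′ the complement of Ω ⊂ {1,...,N}, H = (I - B_{Ω′})^{-1}, and F = H B_{Ω′Ω}. Then every row sum of F is at most 1, and in fact equals 1 - μ(2-μ)·(row sum of H). -/
/-!
Write `M = B_{Ω′Ω′}` and `K = B_{Ω′Ω}`. As `B = A²` has constant row sums `c = (1-μ)²`,
`K 𝟙 = c 𝟙 - M 𝟙`, and `H (1 - M) = 1` gives `H M = H - 1`; hence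
`F 𝟙 = H K 𝟙 = c H 𝟙 - (H - 1) 𝟙 = 𝟙 - (1 - c) H 𝟙`, with `1 - c = μ(2-μ)`.
The inverse exists because the `ℓ∞` operator norm of `M` is at most `c < 1`, and the row sums
`x = H 𝟙` solve `x = 𝟙 + M x`, so a minimum principle for the nonnegative substochastic `M`
gives `x ≥ 0`.
-/

open Matrix Finset BigOperators

namespace Matrix

variable {ι κ ν 𝕜 R : Type*}

theorem mulVec_one_apply [Fintype ι] [NonAssocSemiring R] (A : Matrix κ ι R) (i : κ) :
    (A *ᵥ 1) i = ∑ j, A i j := by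
  simp [mulVec, dotProduct]

theorem sum_mul_apply_of_forall_sum_eq [Fintype ι] [NonUnitalNonAssocSemiring R]
    {A B : Matrix ι ι R} {a b : R} (hA : ∀ i, ∑ j, A i j = a) (hB : ∀ i, ∑ j, B i j = b)
    (i : ι) : ∑ j, (A * B) i j = a * b := by
  simp_rw [mul_apply]
  rw [Finset.sum_comm]
  simp_rw [← Finset.mul_sum, hB, ← Finset.sum_mul, hA]

attribute [local instance] Matrix.linftyOpNormedRing Matrix.linftyOpNormedSpace in
theorem isUnit_one_sub_of_forall_sum_norm_lt_one [Fintype ι] [DecidableEq ι]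
    [NontriviallyNormedField 𝕜] [CompleteSpace 𝕜] (M : Matrix ι ι 𝕜)
    (h : ∀ i, ∑ j, ‖M i j‖ < 1) : IsUnit (1 - M) := by
  -- The instance search finds completeness only for the product uniformity, which is not
  -- reducibly the one of the `ℓ∞` operator norm.
  have :=
    @instHasSummableGeomSeriesOfCompleteSpace _ _ (FiniteDimensional.complete 𝕜 (Matrix ι ι 𝕜))
  refine isUnit_one_sub_of_norm_lt_one ?_
  rw [← coe_nnnorm, linfty_opNNNorm_def, ← NNReal.coe_one, NNReal.coe_lt_coe,
    Finset.sup_lt_iff zero_lt_one]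
  exact fun i _ => NNReal.coe_lt_coe.mp (by simpa using h i)

theorem nonneg_of_mulVec_lt [Fintype ι] {M : Matrix ι ι ℝ} (hM : ∀ i j, 0 ≤ M i j)
    (hrow : ∀ i, ∑ j, M i j ≤ 1) {v : ι → ℝ} (hv : ∀ i, (M *ᵥ v) i < v i) (i : ι) : 0 ≤ v i := by
  have : Nonempty ι := ⟨i⟩
  obtain ⟨i₀, hi₀⟩ := Finite.exists_min v
  suffices 0 ≤ v i₀ from this.trans (hi₀ i)
  by_contra! hneg
  have : (∑ j, M i₀ j) * v i₀ ≤ (M *ᵥ v) i₀ := by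
    rw [Finset.sum_mul]
    exact Finset.sum_le_sum fun j _ => mul_le_mul_of_nonneg_left (hi₀ j) (hM i₀ j)
  nlinarith [hv i₀, hrow i₀]

theorem sum_inv_one_sub_apply_nonneg [Fintype ι] [DecidableEq ι] {M : Matrix ι ι ℝ}
    (hM : ∀ i j, 0 ≤ M i j) (hrow : ∀ i, ∑ j, M i j ≤ 1) (hunit : IsUnit (1 - M)) (i : ι) :
    0 ≤ ∑ j, (1 - M)⁻¹ i j := by
  have hx : (1 - M) *ᵥ ((1 - M)⁻¹ *ᵥ 1) = 1 := by
    rw [mulVec_mulVec, mul_nonsing_inv _ ((isUnit_iff_isUnit_det _).mp hunit), one_mulVec]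
  rw [← mulVec_one_apply]
  refine nonneg_of_mulVec_lt hM hrow (fun j => ?_) i
  have := congrFun hx j
  simp only [sub_mulVec, one_mulVec, Pi.sub_apply, Pi.one_apply] at this
  linarith

theorem sum_inv_one_sub_mul_apply [Fintype κ] [Fintype ν] [DecidableEq κ] [CommRing R]
    {M : Matrix κ κ R} {K : Matrix κ ν R} {c : R} (hrow : ∀ i, ∑ j, M i j + ∑ j, K i j = c)
    (hunit : IsUnit (1 - M)) (i : κ) :
    ∑ j, ((1 - M)⁻¹ * K) i j = 1 - (1 - c) * ∑ j, (1 - M)⁻¹ i j := by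
  set H := (1 - M)⁻¹
  have hHM : H * M = H - 1 := by
    have := nonsing_inv_mul _ ((isUnit_iff_isUnit_det _).mp hunit)
    rw [mul_sub, mul_one] at this
    rw [← this, sub_sub_cancel]
  have hK : K *ᵥ 1 = c • 1 - M *ᵥ 1 := by
    ext m
    simp [mulVec_one_apply, ← hrow m]
  rw [← mulVec_one_apply, ← mulVec_one_apply, ← mulVec_mulVec, hK, mulVec_sub, mulVec_mulVec, hHM,
    sub_mulVec, one_mulVec, mulVec_smul]
  simp only [Pi.sub_apply, Pi.smul_apply, Pi.one_apply, smul_eq_mul]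
  ring

end Matrix

theorem F_row_sums_general
    {N : ℕ} (μ : ℝ) (hμ0 : 0 < μ) (hμ1 : μ < 1)
    (A : Matrix (Fin N) (Fin N) ℝ)
    (hnonneg : ∀ i j, 0 ≤ A i j) (hrow : ∀ i, ∑ j, A i j = 1 - μ)
    (S : Finset (Fin N))
    (H : Matrix {i // i ∈ Sᶜ} {i // i ∈ Sᶜ} ℝ)
    (hH : H = (1 - (A * A).submatrix (fun i : {i // i ∈ Sᶜ} => (i : Fin N))
              (fun j : {j // j ∈ Sᶜ} => (j : Fin N)))⁻¹)
    (F : Matrix {i // i ∈ Sᶜ} {i // i ∈ S} ℝ)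
    (hF : F = H * (A * A).submatrix (fun i : {i // i ∈ Sᶜ} => (i : Fin N))
              (fun j : {j // j ∈ S} => (j : Fin N))) :
    ∀ ℓ, (∑ j, F ℓ j = 1 - μ * (2 - μ) * ∑ m, H ℓ m) ∧ (∑ j, F ℓ j ≤ 1) := by
  intro ℓ
  set M := (A * A).submatrix (fun i : {i // i ∈ Sᶜ} => (i : Fin N)) (fun j : {j // j ∈ Sᶜ} => j)
  set K := (A * A).submatrix (fun i : {i // i ∈ Sᶜ} => (i : Fin N)) (fun j : {j // j ∈ S} => j)
  have hAA_nonneg (i j) : 0 ≤ (A * A) i j := by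
    rw [mul_apply]
    exact sum_nonneg fun k _ => mul_nonneg (hnonneg i k) (hnonneg k j)
  have hsplit (i) : ∑ j, M i j + ∑ j, K i j = (1 - μ) * (1 - μ) := by
    simp only [M, K, submatrix_apply]
    rw [sum_coe_sort Sᶜ fun j => (A * A) i j, sum_coe_sort S fun j => (A * A) i j,
      sum_compl_add_sum, sum_mul_apply_of_forall_sum_eq hrow hrow]
  have hM_nonneg (i j) : 0 ≤ M i j := hAA_nonneg _ _
  have hM_row (i) : ∑ j, M i j ≤ (1 - μ) * (1 - μ) :=
    (le_add_of_nonneg_right (sum_nonneg fun j _ => hAA_nonneg _ _)).trans (hsplit i).le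
  have hunit : IsUnit (1 - M) := isUnit_one_sub_of_forall_sum_norm_lt_one M fun i => by
    rw [sum_congr rfl fun j _ => Real.norm_of_nonneg (hM_nonneg i j)]
    nlinarith [hM_row i]
  have hF_row : ∑ j, F ℓ j = 1 - μ * (2 - μ) * ∑ m, H ℓ m := by
    rw [hF, hH, sum_inv_one_sub_mul_apply hsplit hunit]
    ring
  have hH_row : 0 ≤ ∑ m, H ℓ m := hH ▸ sum_inv_one_sub_apply_nonneg hM_nonneg
    (fun i => (hM_row i).trans (by nlinarith)) hunit ℓ
  refine ⟨hF_row, ?_⟩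
  have : 0 ≤ μ * (2 - μ) * ∑ m, H ℓ m := mul_nonneg (by nlinarith) hH_row
  linarith

/-- With `A` symmetric nonnegative, row sums `1-μ`, `B = A²`, `H = (I - B_{Ω'Ω'})⁻¹`,
`F = H B_{Ω'Ω}`: every row sum of `F` equals `1 - μ(2-μ)·(row sum of H)` and is at most `1`. -/
theorem F_row_sums
    {N : ℕ} (μ : ℝ) (hμ0 : 0 < μ) (hμ1 : μ < 1)
    (A : Matrix (Fin N) (Fin N) ℝ) (hsymm : A.IsSymm)
    (hnonneg : ∀ i j, 0 ≤ A i j) (hrow : ∀ i, ∑ j, A i j = 1 - μ)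
    (S : Finset (Fin N))
    (H : Matrix {i // i ∈ Sᶜ} {i // i ∈ Sᶜ} ℝ)
    (hH : H = (1 - (A * A).submatrix (fun i : {i // i ∈ Sᶜ} => (i : Fin N))
              (fun j : {j // j ∈ Sᶜ} => (j : Fin N)))⁻¹)
    (F : Matrix {i // i ∈ Sᶜ} {i // i ∈ S} ℝ)
    (hF : F = H * (A * A).submatrix (fun i : {i // i ∈ Sᶜ} => (i : Fin N))
              (fun j : {j // j ∈ S} => (j : Fin N))) :
    ∀ ℓ, (∑ j, F ℓ j = 1 - μ * (2 - μ) * ∑ m, H ℓ m) ∧ (∑ j, F ℓ j ≤ 1) :=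
  F_row_sums_general μ hμ0 hμ1 A hnonneg hrow S H hH F hF
end

section
/- Let A be an N×N symmetric matrix with spectral radius less than 1, Z = I - A², Ω ⊂ {1,...,N} with complement Ω′, R_0 = μ² Z^{-1}, R_1 = A R_0. Then the 'rough estimate' Â = [R_1]_Ω ([R_0]_Ω)^{-1} satisfies Â = A_Ω + A_{ΩΩ′}(I - [A²]_{Ω′})^{-1}[A²]_{Ω′Ω}. -/
open Matrix Finset

/-!
The factor `μ²` cancels from `Â`. Splitting the sum in
`(A Z⁻¹)_{ΩΩ} = A_Ω [Z⁻¹]_Ω + A_{ΩΩ'} [Z⁻¹]_{Ω'Ω}` and reading off the `Ω'Ω` block of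
`Z Z⁻¹ = I`, which gives `[Z⁻¹]_{Ω'Ω} = -(Z_{Ω'})⁻¹ Z_{Ω'Ω} [Z⁻¹]_Ω`, yields
`Â = A_Ω - A_{ΩΩ'} (Z_{Ω'})⁻¹ Z_{Ω'Ω}`, and `Z_{Ω'} = I - [A²]_{Ω'}`, `Z_{Ω'Ω} = -[A²]_{Ω'Ω}`.
All inverses involved are genuine because `Z` is positive definite: the eigenvalues of `Z`
are `1 - λ²` for the eigenvalues `λ ∈ (-1, 1)` of `A`.
-/

namespace Matrix

variable {n : Type*} [Fintype n] [DecidableEq n]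

theorem PosDef.isUnit_det {K : Type*} [Field K] [PartialOrder K] [StarRing K] {M : Matrix n n K}
    (hM : M.PosDef) : IsUnit M.det :=
  (isUnit_iff_isUnit_det M).mp hM.isUnit

open scoped MatrixOrder ComplexOrder in
theorem IsHermitian.posDef_one_sub_mul_self {𝕜 : Type*} [RCLike 𝕜] {A : Matrix n n 𝕜}
    (hA : A.IsHermitian) (hspec : ∀ z ∈ spectrum ℝ A, |z| < 1) : (1 - A * A).PosDef := by
  have hA' : IsSelfAdjoint A := hA
  have hcfc : cfc (fun x : ℝ => 1 - x * x) A = 1 - A * A := by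
    rw [cfc_sub _ _, cfc_const_one ℝ A, cfc_mul _ _, cfc_id' ℝ A]
  rw [← isStrictlyPositive_iff_posDef, ← hcfc, cfc_isStrictlyPositive_iff _ A]
  intro x hx
  have := abs_lt.mp (hspec x hx)
  nlinarith

theorem inv_smul_of_ne_zero {K : Type*} [Field K] {c : K} (hc : c ≠ 0) (M : Matrix n n K) :
    (c • M)⁻¹ = c⁻¹ • M⁻¹ := by
  by_cases hM : IsUnit M.det
  · exact inv_smul' (A := M) (Units.mk0 c hc) hM
  · have hcM : ¬IsUnit (c • M).det := by
      rwa [det_smul, IsUnit.mul_iff, and_iff_right (pow_ne_zero _ hc).isUnit]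
    rw [nonsing_inv_apply_not_isUnit _ hM, nonsing_inv_apply_not_isUnit _ hcM, smul_zero]

theorem smul_mul_inv_smul {m K : Type*} [Field K] {c : K} (hc : c ≠ 0) (M : Matrix m n K)
    (P : Matrix n n K) : (c • M) * (c • P)⁻¹ = M * P⁻¹ := by
  rw [inv_smul_of_ne_zero hc, smul_mul, Matrix.mul_smul, smul_smul, mul_inv_cancel₀ hc, one_smul]

theorem disjoint_mem_compl_mem (S : Finset n) : Disjoint (· ∈ Sᶜ) (· ∈ S) :=
  fun _ hc hs _ h => mem_compl.mp (hc _ h) (hs _ h)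

theorem toBlock_mul_eq_add_compl {l o R : Type*} [NonUnitalNonAssocSemiring R] (S : Finset n)
    (M : Matrix l n R) (P : Matrix n o R) (p : l → Prop) (q : o → Prop) :
    (M * P).toBlock p q = M.toBlock p (· ∈ S) * P.toBlock (· ∈ S) q
      + M.toBlock p (· ∈ Sᶜ) * P.toBlock (· ∈ Sᶜ) q := by
  ext i j
  simp only [toBlock_apply, add_apply, mul_apply]
  rw [sum_coe_sort S (fun k => M i k * P k j), sum_coe_sort Sᶜ (fun k => M i k * P k j)]
  exact (sum_add_sum_compl S _).symm

section Blocks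

variable {R : Type*} [CommRing R] {Z : Matrix n n R} (S : Finset n)

theorem toBlock_compl_inv_mul_inv_toBlock (hZ : IsUnit Z.det)
    (hZc : IsUnit (Z.toBlock (· ∈ Sᶜ) (· ∈ Sᶜ)).det)
    (hZinv : IsUnit (Z⁻¹.toBlock (· ∈ S) (· ∈ S)).det) :
    Z⁻¹.toBlock (· ∈ Sᶜ) (· ∈ S) * (Z⁻¹.toBlock (· ∈ S) (· ∈ S))⁻¹
      = -((Z.toBlock (· ∈ Sᶜ) (· ∈ Sᶜ))⁻¹ * Z.toBlock (· ∈ Sᶜ) (· ∈ S)) := by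
  have hblock : Z.toBlock (· ∈ Sᶜ) (· ∈ S) * Z⁻¹.toBlock (· ∈ S) (· ∈ S)
      + Z.toBlock (· ∈ Sᶜ) (· ∈ Sᶜ) * Z⁻¹.toBlock (· ∈ Sᶜ) (· ∈ S) = 0 := by
    rw [← toBlock_mul_eq_add_compl, mul_nonsing_inv _ hZ,
      toBlock_one_disjoint (disjoint_mem_compl_mem S)]
  have hsolve : Z⁻¹.toBlock (· ∈ Sᶜ) (· ∈ S) = -((Z.toBlock (· ∈ Sᶜ) (· ∈ Sᶜ))⁻¹
      * Z.toBlock (· ∈ Sᶜ) (· ∈ S) * Z⁻¹.toBlock (· ∈ S) (· ∈ S)) := by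
    rw [← nonsing_inv_mul_cancel_left _ (Z⁻¹.toBlock (· ∈ Sᶜ) (· ∈ S)) hZc,
      eq_neg_of_add_eq_zero_right hblock, Matrix.mul_neg, Matrix.mul_assoc]
  rw [hsolve, Matrix.neg_mul, Matrix.mul_assoc, mul_nonsing_inv _ hZinv, Matrix.mul_one]

theorem toBlock_mul_inv_mul_inv_toBlock (A : Matrix n n R) (hZ : IsUnit Z.det)
    (hZc : IsUnit (Z.toBlock (· ∈ Sᶜ) (· ∈ Sᶜ)).det)
    (hZinv : IsUnit (Z⁻¹.toBlock (· ∈ S) (· ∈ S)).det) :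
    (A * Z⁻¹).toBlock (· ∈ S) (· ∈ S) * (Z⁻¹.toBlock (· ∈ S) (· ∈ S))⁻¹
      = A.toBlock (· ∈ S) (· ∈ S) - A.toBlock (· ∈ S) (· ∈ Sᶜ)
          * (Z.toBlock (· ∈ Sᶜ) (· ∈ Sᶜ))⁻¹ * Z.toBlock (· ∈ Sᶜ) (· ∈ S) := by
  rw [toBlock_mul_eq_add_compl S, Matrix.add_mul, Matrix.mul_assoc, mul_nonsing_inv _ hZinv,
    Matrix.mul_one, Matrix.mul_assoc, toBlock_compl_inv_mul_inv_toBlock S hZ hZc hZinv,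
    Matrix.mul_neg, ← Matrix.mul_assoc, sub_eq_add_neg]

end Blocks

end Matrix

/-- With `Z = I - A²`, `R₀ = μ² Z⁻¹`, `R₁ = A R₀`, the rough estimate
`Â = [R₁]_Ω ([R₀]_Ω)⁻¹` equals `A_Ω + A_{ΩΩ'} (I - [A²]_{Ω'})⁻¹ [A²]_{Ω'Ω}`. -/
theorem rough_estimate_decomposition
    {N : ℕ} (μ : ℝ) (hμ : μ ≠ 0)
    (A : Matrix (Fin N) (Fin N) ℝ) (hsymm : A.IsSymm)
    (hspec : ∀ z ∈ spectrum ℝ A, |z| < 1)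
    (S : Finset (Fin N)) :
    ((A * (μ ^ 2 • (1 - A * A)⁻¹)).submatrix
        (fun a : {i // i ∈ S} => (a : Fin N)) (fun a : {i // i ∈ S} => (a : Fin N)))
      * ((μ ^ 2 • (1 - A * A)⁻¹).submatrix
        (fun a : {i // i ∈ S} => (a : Fin N)) (fun a : {i // i ∈ S} => (a : Fin N)))⁻¹
    = A.submatrix (fun a : {i // i ∈ S} => (a : Fin N)) (fun a : {i // i ∈ S} => (a : Fin N))
      + A.submatrix (fun a : {i // i ∈ S} => (a : Fin N)) (fun a : {i // i ∈ Sᶜ} => (a : Fin N))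
        * (1 - (A * A).submatrix (fun a : {i // i ∈ Sᶜ} => (a : Fin N))
              (fun a : {i // i ∈ Sᶜ} => (a : Fin N)))⁻¹
        * (A * A).submatrix (fun a : {i // i ∈ Sᶜ} => (a : Fin N))
              (fun a : {i // i ∈ S} => (a : Fin N)) := by
  have hZ : (1 - A * A).PosDef :=
    (isHermitian_iff_isSymm.mpr hsymm).posDef_one_sub_mul_self hspec
  have hZc : ((1 - A * A).toBlock (· ∈ Sᶜ) (· ∈ Sᶜ)).PosDef :=
    hZ.submatrix Subtype.val_injective
  have hZinv : ((1 - A * A)⁻¹.toBlock (· ∈ S) (· ∈ S)).PosDef :=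
    hZ.inv.submatrix Subtype.val_injective
  have hdiag :
      (1 - A * A).toBlock (· ∈ Sᶜ) (· ∈ Sᶜ) = 1 - (A * A).toBlock (· ∈ Sᶜ) (· ∈ Sᶜ) := by
    rw [← toBlock_one_self]; rfl
  have hoff : (1 - A * A).toBlock (· ∈ Sᶜ) (· ∈ S) = -(A * A).toBlock (· ∈ Sᶜ) (· ∈ S) := by
    rw [← zero_sub, ← toBlock_one_disjoint (disjoint_mem_compl_mem S)]; rfl
  calc (A * (μ ^ 2 • (1 - A * A)⁻¹)).toBlock (· ∈ S) (· ∈ S)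
        * ((μ ^ 2 • (1 - A * A)⁻¹).toBlock (· ∈ S) (· ∈ S))⁻¹
      = (A * (1 - A * A)⁻¹).toBlock (· ∈ S) (· ∈ S)
          * ((1 - A * A)⁻¹.toBlock (· ∈ S) (· ∈ S))⁻¹ := by
        rw [mul_smul_comm]
        exact smul_mul_inv_smul (pow_ne_zero 2 hμ) _ _
    _ = A.toBlock (· ∈ S) (· ∈ S) - A.toBlock (· ∈ S) (· ∈ Sᶜ)
          * ((1 - A * A).toBlock (· ∈ Sᶜ) (· ∈ Sᶜ))⁻¹ * (1 - A * A).toBlock (· ∈ Sᶜ) (· ∈ S) :=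
        toBlock_mul_inv_mul_inv_toBlock S A hZ.isUnit_det hZc.isUnit_det hZinv.isUnit_det
    _ = _ := by rw [hdiag, hoff, Matrix.mul_neg, sub_neg_eq_add]; rfl
end

section
/- In an Erdős–Rényi graph G(N, p_N) with p_N = (ln N + c_N)/N and self-loops at every node, conditionally on the event that edge (i,j) is present, the probability that the maximal degree exceeds e·N·p_N is at most (e + 2e²/N)·e^{-c_N}. In particular this probability tends to 0 if c_N → ∞. -/
open MeasureTheory ProbabilityTheory Finset
open scoped ENNReal

/-! Union bound over the nodes `ℓ`, and for each node a Chernoff bound with `η = e`. Encoding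
edges as increasing pairs `q`, `d_ℓ = 1 + ∑_{q ∋ ℓ} g_q` with `N - 1` independent Bernoulli(`p`)
summands, so with `A = {g_ij = 1}` we get `E[1_A e^{d_ℓ}] = e p (1 + (e - 1) p)^{N-1}` for
`ℓ ∉ {i, j}`, and at most `e` times that for `ℓ ∈ {i, j}`, where `g_ij` is itself a summand.
As `(1 + (e - 1) p)^{N-1} ≤ e^{(e-1) N p}`, the factor `e^{-e N p}` of Markov's inequality leaves
`e^{-N p} = e^{-c} / N`; summing over `ℓ` gives `P(A ∩ {d_max ≥ e N p}) ≤ p e^{-c} (e + 2e(e-1)/N)`,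
and `P(A) = p`. -/

lemma one_add_pow_le_exp_mul {x : ℝ} (hx : -1 ≤ x) (n : ℕ) : (1 + x) ^ n ≤ Real.exp (x * n) := by
  rw [mul_comm, Real.exp_nat_mul]
  exact pow_le_pow_left₀ (by linarith) (by linarith [Real.add_one_le_exp x]) n

lemma sum_ite_eq_or_eq {α R : Type*} [Fintype α] [DecidableEq α] [CommRing R] {i j : α}
    (hij : i ≠ j) (x : R) :
    ∑ ℓ, (if ℓ = i ∨ ℓ = j then x else 1) = Fintype.card α + 2 * (x - 1) := by
  have hsplit : ∀ ℓ, (if ℓ = i ∨ ℓ = j then x else 1)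
      = 1 + if ℓ ∈ ({i, j} : Finset α) then x - 1 else 0 := by
    intro ℓ
    simp only [mem_insert, mem_singleton]
    split_ifs <;> ring
  rw [sum_congr rfl fun ℓ _ => hsplit ℓ, sum_add_distrib, sum_ite_mem, univ_inter, sum_const,
    sum_const, card_pair hij, card_univ]
  simp only [nsmul_eq_mul, mul_one]
  ring

lemma cond_le_of_measure_inter_le {Ω : Type*} [MeasurableSpace Ω] {μ : Measure Ω}
    [IsFiniteMeasure μ] {s t : Set Ω} (hs : MeasurableSet s) {r : ℝ≥0∞}
    (h : μ (s ∩ t) ≤ μ s * r) : μ[t | s] ≤ r := by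
  rw [cond_apply hs]
  by_cases h0 : μ s = 0
  · rw [h0, zero_mul, nonpos_iff_eq_zero] at h
    simp [h]
  · rwa [ENNReal.inv_mul_le_iff h0 (measure_ne_top μ s)]

lemma measure_inter_sup_ge_le_sum {α Ω : Type*} [Fintype α] [Nonempty α] [MeasurableSpace Ω]
    (μ : Measure Ω) (A : Set Ω) (f : α → Ω → ℕ) (t : ℝ) :
    μ (A ∩ {ω | t ≤ ((univ.sup fun ℓ => f ℓ ω : ℕ) : ℝ)})
      ≤ ∑ ℓ, μ (A ∩ {ω | t ≤ (f ℓ ω : ℝ)}) := by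
  refine (measure_mono ?_).trans (measure_iUnion_fintype_le μ _)
  rintro ω ⟨hA, ht⟩
  obtain ⟨ℓ, -, hℓ⟩ := exists_mem_eq_sup univ univ_nonempty fun ℓ => f ℓ ω
  exact Set.mem_iUnion.2 ⟨ℓ, hA, by simpa [hℓ] using ht⟩

section IncreasingPairs

variable {α : Type*} [LinearOrder α]

def orderedPair (a b : α) (h : a ≠ b) : {q : α × α // q.1 < q.2} :=
  ⟨(min a b, max a b), min_lt_max.2 h⟩

lemma apply_orderedPair {β : Type*} {f : α → α → β} (hf : ∀ a b, f a b = f b a) {a b : α}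
    (h : a ≠ b) : f (orderedPair a b h).1.1 (orderedPair a b h).1.2 = f a b := by
  rcases le_total a b with hab | hab
  · simp [orderedPair, hab]
  · simp [orderedPair, hab, hf b a]

variable [Fintype α]

def edgesAt (ℓ : α) : Finset {q : α × α // q.1 < q.2} :=
  univ.filter fun q => q.1.1 = ℓ ∨ q.1.2 = ℓ

lemma orderedPair_mem_edgesAt_iff {a b : α} (h : a ≠ b) (ℓ : α) :
    orderedPair a b h ∈ edgesAt ℓ ↔ ℓ = a ∨ ℓ = b := by
  rcases le_total a b with hab | hab <;>
    simp [edgesAt, orderedPair, hab, eq_comm (b := ℓ)]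
  tauto

lemma sum_edgesAt {M : Type*} [AddCommMonoid M] {f : α → α → M} (hf : ∀ a b, f a b = f b a)
    (ℓ : α) : ∑ q ∈ edgesAt ℓ, f q.1.1 q.1.2 = ∑ k ∈ univ.erase ℓ, f ℓ k := by
  symm
  refine sum_bij' (fun k hk => orderedPair ℓ k (ne_of_mem_erase hk).symm)
    (fun q _ => if q.1.1 = ℓ then q.1.2 else q.1.1) ?_ ?_ ?_ ?_ ?_
  · intro k hk
    rcases lt_or_gt_of_ne (ne_of_mem_erase hk) with h | h <;>
      simp [edgesAt, orderedPair, h.le, h.ne]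
  · rintro ⟨⟨x, y⟩, hxy : x < y⟩ hq
    rcases (mem_filter.1 hq).2 with rfl | rfl <;> simp [hxy.ne, hxy.ne']
  · intro k hk
    rcases lt_or_gt_of_ne (ne_of_mem_erase hk) with h | h <;> simp [orderedPair, h.le, h.ne]
  · rintro ⟨⟨x, y⟩, hxy : x < y⟩ hq
    rcases (mem_filter.1 hq).2 with rfl | rfl <;> simp [orderedPair, hxy.le, hxy.ne]
  · intro k hk
    exact (apply_orderedPair hf _).symm

lemma card_edgesAt (ℓ : α) : #(edgesAt ℓ) = Fintype.card α - 1 := by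
  simpa [card_erase_of_mem] using sum_edgesAt (f := fun _ _ => (1 : ℕ)) (fun _ _ => rfl) ℓ

end IncreasingPairs

section BernoulliFamily

variable {Ω ι : Type*} [MeasurableSpace Ω] {P : Measure Ω} [IsProbabilityMeasure P] {p : ℝ}

lemma lintegral_comp_of_bernoulli {Y : Ω → ℕ} (hY : Measurable Y)
    (h01 : ∀ ω, Y ω = 0 ∨ Y ω = 1) (hp : P {ω | Y ω = 1} = ENNReal.ofReal p) (hp0 : 0 ≤ p)
    (F : ℕ → ℝ≥0∞) :
    ∫⁻ ω, F (Y ω) ∂P = F 1 * ENNReal.ofReal p + F 0 * ENNReal.ofReal (1 - p) := by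
  have hA : MeasurableSet {ω | Y ω = 1} := hY (measurableSet_singleton 1)
  have hsplit : (fun ω => F (Y ω)) = fun ω => {ω | Y ω = 1}.indicator (fun _ => F 1) ω
      + {ω | Y ω = 1}ᶜ.indicator (fun _ => F 0) ω := by
    funext ω
    rcases h01 ω with h | h <;> simp [h]
  rw [hsplit, lintegral_add_left (measurable_const.indicator hA), lintegral_indicator hA,
    lintegral_indicator hA.compl, setLIntegral_const, setLIntegral_const,
    prob_compl_eq_one_sub hA, hp, ENNReal.ofReal_sub _ hp0, ENNReal.ofReal_one]

lemma lintegral_exp_mul_of_bernoulli {Y : Ω → ℕ} (hY : Measurable Y)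
    (h01 : ∀ ω, Y ω = 0 ∨ Y ω = 1) (hp : P {ω | Y ω = 1} = ENNReal.ofReal p) (hp0 : 0 ≤ p)
    (θ : ℝ) :
    ∫⁻ ω, ENNReal.ofReal (Real.exp (θ * Y ω)) ∂P = ENNReal.ofReal (1 + (Real.exp θ - 1) * p) := by
  have hp1 : p ≤ 1 := ENNReal.ofReal_le_one.mp (hp ▸ prob_le_one)
  rw [lintegral_comp_of_bernoulli hY h01 hp hp0 fun n => ENNReal.ofReal (Real.exp (θ * n)),
    ← ENNReal.ofReal_mul (Real.exp_pos _).le, ← ENNReal.ofReal_mul (Real.exp_pos _).le,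
    ← ENNReal.ofReal_add (by positivity) (by simp; linarith)]
  congr 1
  simp only [Nat.cast_one, mul_one, Nat.cast_zero, mul_zero, Real.exp_zero]
  ring

variable {X : ι → Ω → ℕ}

lemma lintegral_indicator_mul_prod_exp (hX : ∀ q, Measurable (X q))
    (h01 : ∀ q ω, X q ω = 0 ∨ X q ω = 1) (hp : ∀ q, P {ω | X q ω = 1} = ENNReal.ofReal p)
    (hp0 : 0 ≤ p) (hindep : iIndepFun X P) {a : ι} {s : Finset ι} (ha : a ∉ s) (θ : ℝ) :
    ∫⁻ ω, {ω | X a ω = 1}.indicator 1 ω * ∏ q ∈ s, ENNReal.ofReal (Real.exp (θ * X q ω)) ∂P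
      = ENNReal.ofReal p * ENNReal.ofReal (1 + (Real.exp θ - 1) * p) ^ #s := by
  classical
  let F : ι → ℕ → ℝ≥0∞ := fun q n =>
    if q = a then (if n = 1 then 1 else 0) else ENNReal.ofReal (Real.exp (θ * n))
  have hF : ∀ ω, {ω | X a ω = 1}.indicator 1 ω * ∏ q ∈ s, ENNReal.ofReal (Real.exp (θ * X q ω))
      = ∏ q ∈ insert a s, F q (X q ω) := by
    intro ω
    rw [prod_insert ha]
    congr 1
    · simp [F, Set.indicator_apply]
    · exact prod_congr rfl fun q hq => by simp [F, ne_of_mem_of_not_mem hq ha]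
  simp_rw [hF]
  rw [lintegral_prod_eq_prod_lintegral_of_indepFun _ (fun q ω => F q (X q ω))
    (hindep.comp F fun _ => measurable_from_top)
    fun q => (measurable_from_top (f := F q)).comp (hX q),
    prod_insert ha, ← prod_const]
  congr 1
  · simp [F, lintegral_comp_of_bernoulli (hX a) (h01 a) (hp a) hp0
      fun n => if n = 1 then 1 else 0]
  · refine prod_congr rfl fun q hq => ?_
    simp only [F, if_neg (ne_of_mem_of_not_mem hq ha)]
    exact lintegral_exp_mul_of_bernoulli (hX q) (h01 q) (hp q) hp0 θ

lemma measure_eq_one_inter_sum_ge_le_of_notMem (hX : ∀ q, Measurable (X q))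
    (h01 : ∀ q ω, X q ω = 0 ∨ X q ω = 1) (hp : ∀ q, P {ω | X q ω = 1} = ENNReal.ofReal p)
    (hp0 : 0 ≤ p) (hindep : iIndepFun X P) {a : ι} {s : Finset ι} (ha : a ∉ s) {θ : ℝ}
    (hθ : 0 ≤ θ) (t : ℝ) :
    P ({ω | X a ω = 1} ∩ {ω | t ≤ ∑ q ∈ s, (X q ω : ℝ)})
      ≤ ENNReal.ofReal (p * Real.exp (-(θ * t)) * (1 + (Real.exp θ - 1) * p) ^ #s) := by
  set Z : Ω → ℝ≥0∞ := fun ω =>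
    {ω | X a ω = 1}.indicator 1 ω * ∏ q ∈ s, ENNReal.ofReal (Real.exp (θ * X q ω))
  have hZ : Measurable Z :=
    (measurable_const.indicator (hX a (measurableSet_singleton 1))).mul
      (Finset.measurable_prod s fun q _ =>
        (measurable_from_top (f := fun n : ℕ => ENNReal.ofReal (Real.exp (θ * n)))).comp (hX q))
  have hlarge : {ω | X a ω = 1} ∩ {ω | t ≤ ∑ q ∈ s, (X q ω : ℝ)}
      ⊆ {ω | ENNReal.ofReal (Real.exp (θ * t)) ≤ Z ω} := by
    rintro ω ⟨h1, ht : t ≤ ∑ q ∈ s, (X q ω : ℝ)⟩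
    change _ ≤ {ω | X a ω = 1}.indicator (1 : Ω → ℝ≥0∞) ω * _
    rw [Set.indicator_of_mem h1, Pi.one_apply, one_mul,
      ← ENNReal.ofReal_prod_of_nonneg fun q _ => (Real.exp_pos _).le, ← Real.exp_sum,
      ← Finset.mul_sum]
    exact ENNReal.ofReal_le_ofReal (Real.exp_le_exp.2 (mul_le_mul_of_nonneg_left ht hθ))
  calc _ ≤ P {ω | ENNReal.ofReal (Real.exp (θ * t)) ≤ Z ω} := measure_mono hlarge
    _ ≤ (∫⁻ ω, Z ω ∂P) / ENNReal.ofReal (Real.exp (θ * t)) :=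
      meas_ge_le_lintegral_div hZ.aemeasurable
        (ENNReal.ofReal_pos.2 (Real.exp_pos _)).ne' ENNReal.ofReal_ne_top
    _ = _ := by
      rw [lintegral_indicator_mul_prod_exp hX h01 hp hp0 hindep ha, ← ENNReal.ofReal_pow
        (by nlinarith [Real.add_one_le_exp θ]), ← ENNReal.ofReal_mul hp0,
        ← ENNReal.ofReal_div_of_pos (Real.exp_pos _), Real.exp_neg]
      congr 1
      field_simp

lemma measure_eq_one_inter_sum_ge_le [DecidableEq ι] (hX : ∀ q, Measurable (X q))
    (h01 : ∀ q ω, X q ω = 0 ∨ X q ω = 1) (hp : ∀ q, P {ω | X q ω = 1} = ENNReal.ofReal p)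
    (hp0 : 0 ≤ p) (hindep : iIndepFun X P) (a : ι) (s : Finset ι) {θ : ℝ} (hθ : 0 ≤ θ)
    (t : ℝ) :
    P ({ω | X a ω = 1} ∩ {ω | t ≤ ∑ q ∈ s, (X q ω : ℝ)})
      ≤ ENNReal.ofReal ((if a ∈ s then Real.exp θ else 1) * p
          * Real.exp (-(θ * t) + (Real.exp θ - 1) * p * #s)) := by
  set x := (Real.exp θ - 1) * p
  have hx : 0 ≤ x := mul_nonneg (by linarith [Real.add_one_le_exp θ]) hp0
  by_cases ha : a ∈ s
  · have hsub : {ω | X a ω = 1} ∩ {ω | t ≤ ∑ q ∈ s, (X q ω : ℝ)}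
        ⊆ {ω | X a ω = 1} ∩ {ω | t - 1 ≤ ∑ q ∈ s.erase a, (X q ω : ℝ)} := by
      rintro ω ⟨h1 : X a ω = 1, ht : t ≤ ∑ q ∈ s, (X q ω : ℝ)⟩
      rw [← add_sum_erase s _ ha, h1, Nat.cast_one] at ht
      exact ⟨h1, show t - 1 ≤ _ by linarith⟩
    refine (measure_mono hsub).trans <|
      (measure_eq_one_inter_sum_ge_le_of_notMem hX h01 hp hp0 hindep (notMem_erase a s) hθ
        (t - 1)).trans (ENNReal.ofReal_le_ofReal ?_)
    rw [if_pos ha]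
    calc p * Real.exp (-(θ * (t - 1))) * (1 + x) ^ #(s.erase a)
        ≤ p * Real.exp (-(θ * (t - 1))) * Real.exp (x * #s) := by
          gcongr
          refine (one_add_pow_le_exp_mul (by linarith) _).trans (Real.exp_le_exp.2 ?_)
          exact mul_le_mul_of_nonneg_left (by exact_mod_cast card_erase_le) hx
      _ = Real.exp θ * p * Real.exp (-(θ * t) + x * #s) := by
          rw [show -(θ * (t - 1)) = θ + -(θ * t) by ring, Real.exp_add, Real.exp_add]
          ring
  · rw [if_neg ha, one_mul, Real.exp_add, ← mul_assoc]
    refine (measure_eq_one_inter_sum_ge_le_of_notMem hX h01 hp hp0 hindep ha hθ t).trans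
      (ENNReal.ofReal_le_ofReal ?_)
    gcongr
    exact one_add_pow_le_exp_mul (by linarith) _

end BernoulliFamily

section ErdosRenyi

variable {α : Type*} [LinearOrder α] [Fintype α]

lemma sum_eq_one_add_sum_edgesAt {g : α → α → ℕ} (hsymm : ∀ a b, g a b = g b a)
    (hself : ∀ a, g a a = 1) (ℓ : α) :
    ∑ k, g ℓ k = 1 + ∑ q ∈ edgesAt ℓ, g q.1.1 q.1.2 := by
  rw [sum_edgesAt hsymm, ← add_sum_erase _ _ (mem_univ ℓ), hself]

variable {Ω : Type*} [MeasurableSpace Ω] {P : Measure Ω} [IsProbabilityMeasure P] {p : ℝ}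

lemma measure_edge_inter_degree_ge_le {g : α → α → Ω → ℕ}
    (hmeas : ∀ a b, Measurable (g a b)) (h01 : ∀ a b ω, g a b ω = 0 ∨ g a b ω = 1)
    (hsymm : ∀ a b ω, g a b ω = g b a ω) (hself : ∀ a ω, g a a ω = 1)
    (hbern : ∀ a b, a ≠ b → P {ω | g a b ω = 1} = ENNReal.ofReal p) (hp0 : 0 ≤ p)
    (hindep : iIndepFun (fun (q : {q : α × α // q.1 < q.2}) ω => g q.1.1 q.1.2 ω) P)
    {i j : α} (hij : i ≠ j) (ℓ : α) {θ : ℝ} (hθ : 0 ≤ θ) (t : ℝ) :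
    P ({ω | g i j ω = 1} ∩ {ω | t ≤ ((∑ k, g ℓ k ω : ℕ) : ℝ)})
      ≤ ENNReal.ofReal ((if ℓ = i ∨ ℓ = j then Real.exp θ else 1) * p
          * Real.exp (θ * (1 - t) + (Real.exp θ - 1) * p * (Fintype.card α - 1 : ℕ))) := by
  classical
  have hset : {ω | g i j ω = 1} ∩ {ω | t ≤ ((∑ k, g ℓ k ω : ℕ) : ℝ)}
      = {ω | g (orderedPair i j hij).1.1 (orderedPair i j hij).1.2 ω = 1}
        ∩ {ω | t - 1 ≤ ∑ q ∈ edgesAt ℓ, (g q.1.1 q.1.2 ω : ℝ)} := by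
    ext ω
    simp only [Set.mem_inter_iff, Set.mem_ofPred_eq,
      apply_orderedPair (f := fun a b => g a b ω) (fun a b => hsymm a b ω) hij,
      sum_eq_one_add_sum_edgesAt (g := fun a b => g a b ω) (fun a b => hsymm a b ω)
        (fun a => hself a ω) ℓ, sub_le_iff_le_add']
    push_cast
    rfl
  rw [hset]
  refine (measure_eq_one_inter_sum_ge_le (fun q => hmeas _ _) (fun q => h01 _ _)
    (fun q => hbern _ _ q.2.ne) hp0 hindep _ _ hθ (t - 1)).trans_eq ?_
  simp only [orderedPair_mem_edgesAt_iff, card_edgesAt]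
  congr 3
  ring

end ErdosRenyi

theorem max_degree_conditional_bound_general
    {Ω : Type*} [MeasurableSpace Ω] (P : Measure Ω) [IsProbabilityMeasure P]
    {N : ℕ} (hN : 0 < N) (p c : ℝ) (hp : p = (Real.log N + c) / N)
    (hp0 : 0 ≤ p)
    (g : Fin N → Fin N → Ω → ℕ)
    (hmeas : ∀ i j, Measurable (g i j))
    (h01 : ∀ i j ω, g i j ω = 0 ∨ g i j ω = 1)
    (hsymm : ∀ i j ω, g i j ω = g j i ω)
    (hself : ∀ i ω, g i i ω = 1)
    (hbern : ∀ i j, i ≠ j → P {ω | g i j ω = 1} = ENNReal.ofReal p)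
    (hindep : iIndepFun
        (fun (q : {q : Fin N × Fin N // q.1 < q.2}) ω => g q.1.1 q.1.2 ω) P)
    (i j : Fin N) (hij : i ≠ j) :
    (ProbabilityTheory.cond P {ω | g i j ω = 1})
        {ω | Real.exp 1 * ((N : ℝ) * p)
              ≤ ((Finset.univ.sup fun ℓ : Fin N => ∑ k, g ℓ k ω : ℕ) : ℝ)}
      ≤ ENNReal.ofReal ((Real.exp 1 + 2 * Real.exp 1 ^ 2 / N) * Real.exp (-c)) := by
  have hNpos : (0 : ℝ) < N := by exact_mod_cast hN
  have hscale : Real.exp 1 * Real.exp (-c) / N = Real.exp (1 - N * p) := by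
    rw [hp, mul_div_cancel₀ _ hNpos.ne', sub_add_eq_sub_sub, Real.exp_sub, Real.exp_sub,
      Real.exp_log hNpos, Real.exp_neg]
    field_simp
  have hnode : ∀ ℓ, P ({ω | g i j ω = 1}
        ∩ {ω | Real.exp 1 * (N * p) ≤ ((∑ k, g ℓ k ω : ℕ) : ℝ)})
      ≤ ENNReal.ofReal ((if ℓ = i ∨ ℓ = j then Real.exp 1 else 1) * p
          * (Real.exp 1 * Real.exp (-c) / N)) := by
    intro ℓ
    refine (measure_edge_inter_degree_ge_le hmeas h01 hsymm hself hbern hp0 hindep hij ℓ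
      zero_le_one _).trans (ENNReal.ofReal_le_ofReal ?_)
    rw [hscale]
    gcongr
    have hcard : ((Fintype.card (Fin N) - 1 : ℕ) : ℝ) ≤ N := by simp
    have he : 0 ≤ (Real.exp 1 - 1) * p := mul_nonneg (by linarith [Real.add_one_le_exp 1]) hp0
    nlinarith [mul_le_mul_of_nonneg_left hcard he]
  have : Nonempty (Fin N) := ⟨i⟩
  refine cond_le_of_measure_inter_le
    (show MeasurableSet {ω | g i j ω = 1} from hmeas i j (measurableSet_singleton 1)) ?_
  rw [hbern i j hij, ← ENNReal.ofReal_mul hp0]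
  calc _ ≤ _ := measure_inter_sup_ge_le_sum P _ (fun ℓ ω => ∑ k, g ℓ k ω) _
    _ ≤ _ := sum_le_sum fun ℓ _ => hnode ℓ
    _ = ENNReal.ofReal (p * ((Real.exp 1 + 2 * (Real.exp 1 * (Real.exp 1 - 1)) / N)
          * Real.exp (-c))) := by
      rw [← ENNReal.ofReal_sum_of_nonneg fun ℓ _ => by positivity, ← sum_mul, ← sum_mul,
        sum_ite_eq_or_eq hij, Fintype.card_fin]
      field_simp
    _ ≤ _ := by
      gcongr
      nlinarith [Real.exp_pos 1]

/-- Maximal-degree bound for an Erdős–Rényi graph with `p = (ln N + c)/N` and self-loops: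
conditionally on the edge `(i,j)` being present, the probability that the maximal degree
is at least `e·N·p` is at most `(e + 2e²/N)·e^{-c}`. -/
theorem max_degree_conditional_bound
    {Ω : Type*} [MeasurableSpace Ω] (P : Measure Ω) [IsProbabilityMeasure P]
    {N : ℕ} (hN : 0 < N) (p c : ℝ) (hp : p = (Real.log N + c) / N)
    (hp0 : 0 ≤ p) (hp1 : p ≤ 1)
    (g : Fin N → Fin N → Ω → ℕ)
    (hmeas : ∀ i j, Measurable (g i j))
    (h01 : ∀ i j ω, g i j ω = 0 ∨ g i j ω = 1)
    (hsymm : ∀ i j ω, g i j ω = g j i ω)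
    (hself : ∀ i ω, g i i ω = 1)
    (hbern : ∀ i j, i ≠ j → P {ω | g i j ω = 1} = ENNReal.ofReal p)
    (hindep : iIndepFun
        (fun (q : {q : Fin N × Fin N // q.1 < q.2}) ω => g q.1.1 q.1.2 ω) P)
    (i j : Fin N) (hij : i ≠ j) :
    (ProbabilityTheory.cond P {ω | g i j ω = 1})
        {ω | Real.exp 1 * ((N : ℝ) * p)
              ≤ ((Finset.univ.sup fun ℓ : Fin N => ∑ k, g ℓ k ω : ℕ) : ℝ)}
      ≤ ENNReal.ofReal ((Real.exp 1 + 2 * Real.exp 1 ^ 2 / N) * Real.exp (-c)) :=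
  max_degree_conditional_bound_general P hN p c hp hp0 g hmeas h01 hsymm hself hbern hindep i j hij
end
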